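/- The map π ↦ π' = (n+1) π(1) … π(n) (i.e., π'(1)=n+1 and π'(i+1)=π(i)) composed with the linking map, π ↦ Φ(π'), is a bijection from S_n onto S_{n+1}^c. -/

import Mathlib

/-- Cyclic addition of the constant `k` to all values of a permutation of
`{1, …, n}` (identifying positions/values with `Fin n`, 1-based position `i`
corresponding to `i - 1 : Fin n`): `(addConst π k) i = π i + k (mod n)`. -/
def addConst {n : ℕ} (π : Equiv.Perm (Fin n)) (k : ℕ) : Equiv.Perm (Fin n) :=
  π.trans (finRotate n ^ k)

/-- The linking permutation `Φ(π) = π⁻¹ ∘ (π + 1)`, i.e.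
`Φ(π) i = π⁻¹ (π i + 1)` with cyclic value addition (`n + 1 ≡ 1`). -/
def linkPerm {n : ℕ} (π : Equiv.Perm (Fin n)) : Equiv.Perm (Fin n) :=
  (π.trans (finRotate n)).trans π.symm

/-- A permutation has exactly one orbit: iterating it reaches any element from
any element. -/
def OneOrbit {n : ℕ} (φ : Equiv.Perm (Fin n)) : Prop :=
  ∀ x y : Fin n, ∃ m : ℕ, (φ ^ m) x = y

/-- The descent set of a permutation of `{1, …, n}`, as a set of 1-based
positions: `i ∈ [1, n-1]` is a descent iff `φ(i) > φ(i+1)`.  The 1-based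
position `i` corresponds to the element `i - 1 : Fin n`. -/
def desSet {n : ℕ} (φ : Equiv.Perm (Fin n)) : Set ℕ :=
  {i : ℕ | ∃ h : i < n, 1 ≤ i ∧
    φ ⟨i, h⟩ < φ ⟨i - 1, Nat.lt_of_le_of_lt (Nat.sub_le i 1) h⟩}

/-- `π` is the suffix array of the word `w` of length `n`: `π i` is the
(0-based) starting position of the `i`-th smallest suffix of `w` in the
lexicographic order on lists (a proper prefix precedes its extensions). -/
def IsSuffixArray {α : Type*} [LinearOrder α] {n : ℕ} (w : List α)
    (π : Equiv.Perm (Fin n)) : Prop :=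
  w.length = n ∧ ∀ i j : Fin n, i < j → w.drop (π i : ℕ) < w.drop (π j : ℕ)

/-- `π` is the Burrows–Wheeler array of the word `w` of length `n`: `π i` is
the (0-based) starting position of the `i`-th smallest cyclic shift of `w`. -/
def IsBWArray {α : Type*} [LinearOrder α] {n : ℕ} (w : List α)
    (π : Equiv.Perm (Fin n)) : Prop :=
  w.length = n ∧ ∀ i j : Fin n, i < j → w.rotate (π i : ℕ) < w.rotate (π j : ℕ)

/-- A word is primitive iff it is not a proper power of another word:
`w = v^k` implies `k = 1`. -/
def Primitive {α : Type*} (w : List α) : Prop :=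
  ∀ (v : List α) (k : ℕ), w = (List.replicate k v).flatten → k = 1

/-- From `σ ∈ S_n`, the permutation `π' = (n+1) σ(1) ⋯ σ(n) ∈ S_{n+1}`:
position `1` (element `0 : Fin (n+1)`) is sent to the value `n + 1`
(element `Fin.last n`), and position `i + 1` is sent to the value `σ(i)`. -/
def appendMax {n : ℕ} (σ : Equiv.Perm (Fin n)) : Equiv.Perm (Fin (n + 1)) :=
  ((finSuccEquiv n).trans σ.optionCongr).trans (finSuccEquiv' (Fin.last n)).symm

/-- Binomial coefficient with integer arguments, which is `0` when the lower
index is negative or exceeds the upper index. -/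
def intChoose (m r : ℤ) : ℕ :=
  if 0 ≤ r ∧ r ≤ m then m.toNat.choose r.toNat else 0

/-- `π ∈ S_{n+1}` is ascending-to-max.  Values are 1-based: the value
`i ∈ [1, n-1]` corresponds to `x.castSucc` where `x : Fin n` satisfies
`(x : ℕ) + 1 = i` … i.e. `x = i - 1`; the value `i + 1` corresponds to
`x.succ`, and the value `n + 1` corresponds to `Fin.last n`. -/
def AscendingToMax {n : ℕ} (π : Equiv.Perm (Fin (n + 1))) : Prop :=
  ∀ x : Fin n, (x : ℕ) + 1 < n →
    (π.symm x.castSucc < π.symm (Fin.last n) →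
      π.symm x.succ < π.symm (Fin.last n) →
      π.symm x.castSucc < π.symm x.succ) ∧
    (π.symm (Fin.last n) < π.symm x.castSucc →
      π.symm (Fin.last n) < π.symm x.succ →
      π.symm x.succ < π.symm x.castSucc)

/-- `π ∈ S_{n+1}` is non-nesting.  Values are 1-based: the values `i, j ∈ [1, n]`
correspond to `x.castSucc, y.castSucc` with `x, y : Fin n`, and the values
`i + 1, j + 1` to `x.succ, y.succ`. -/
def NonNesting {n : ℕ} (π : Equiv.Perm (Fin (n + 1))) : Prop :=
  ∀ x y : Fin n, π.symm x.castSucc < π.symm y.castSucc →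
    ((π.symm x.castSucc < π.symm x.succ ∧ π.symm y.castSucc < π.symm y.succ) ∨
      (π.symm x.succ < π.symm x.castSucc ∧ π.symm y.succ < π.symm y.castSucc)) →
    π.symm x.succ < π.symm y.succ

/-!
`Φ(σ) = σ⁻¹ c σ` is the conjugate of the full cycle `c : i ↦ i + 1` by `σ`. The permutations
with one orbit are exactly the conjugates of `c`, and a permutation commuting with `c` that fixes
a point is the identity, so `σ⁻¹ c σ = τ⁻¹ c τ` together with `σ 1 = τ 1` forces `σ = τ`. Since
`c` is transitive, each conjugate has a representative `σ` with `σ 1 = n + 1`, and the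
permutations with this property are exactly those of the form `π'`.
-/

open Equiv Equiv.Perm

section AppendMax

variable {n : ℕ}

lemma appendMax_zero (σ : Perm (Fin n)) : appendMax σ 0 = Fin.last n := by
  simp [appendMax, finSuccEquiv_zero]

lemma appendMax_succ (σ : Perm (Fin n)) (i : Fin n) :
    appendMax σ i.succ = (σ i).castSucc := by
  simp [appendMax, finSuccEquiv_succ, finSuccEquiv'_symm_some]

lemma appendMax_injective : Function.Injective (appendMax (n := n)) := fun σ₁ σ₂ h =>
  Equiv.ext fun i => Fin.castSucc_injective n <| by rw [← appendMax_succ, ← appendMax_succ, h]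

lemma exists_appendMax_eq {τ : Perm (Fin (n + 1))} (h : τ 0 = Fin.last n) :
    ∃ σ, appendMax σ = τ := by
  have hne (i : Fin n) : τ i.succ ≠ Fin.last n := fun hi =>
    Fin.succ_ne_zero i (τ.injective (hi.trans h.symm))
  let f (i : Fin n) : Fin n := (τ i.succ).castPred (hne i)
  have hf : f.Injective := fun a b hab => Fin.succ_injective _ <| τ.injective <| by
    simpa [f] using congrArg Fin.castSucc hab
  refine ⟨Equiv.ofBijective f hf.bijective_of_finite, Equiv.ext fun x => ?_⟩
  cases x using Fin.cases with
  | zero => rw [appendMax_zero, h]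
  | succ i => simp [appendMax_succ, f]

end AppendMax

lemma linkPerm_eq_conj {n : ℕ} (σ : Perm (Fin n)) : linkPerm σ = σ⁻¹ * finRotate n * σ := rfl

open Fin.NatCast Fin.CommRing in
lemma finRotate_pow_apply {n : ℕ} (m : ℕ) (x : Fin (n + 1)) :
    (finRotate (n + 1) ^ m) x = x + m := by
  induction m with
  | zero => simp
  | succ k ih =>
    rw [pow_succ', mul_apply, ih, finRotate_apply]
    push_cast
    ring

open Fin.NatCast Fin.CommRing in
lemma oneOrbit_finRotate {n : ℕ} : OneOrbit (finRotate (n + 1)) := fun x y =>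
  ⟨(y - x).val, by rw [finRotate_pow_apply, Fin.cast_val_eq_self, add_sub_cancel]⟩

namespace OneOrbit

variable {n : ℕ} {φ ψ : Perm (Fin n)}

lemma conj (hφ : OneOrbit φ) (σ : Perm (Fin n)) : OneOrbit (σ⁻¹ * φ * σ) := fun x y => by
  obtain ⟨m, hm⟩ := hφ (σ x) (σ y)
  refine ⟨m, ?_⟩
  have hpow : (σ⁻¹ * φ * σ) ^ m = σ⁻¹ * φ ^ m * σ := by simpa using conj_pow (a := σ⁻¹) (b := φ)
  simp [hpow, mul_apply, hm]

lemma eq_one_of_commute (hφ : OneOrbit φ) {g : Perm (Fin n)} (hg : Commute g φ) {x : Fin n}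
    (hx : g x = x) : g = 1 := by
  ext y
  obtain ⟨m, rfl⟩ := hφ x y
  rw [← mul_apply, (hg.pow_right m).eq, mul_apply, hx, one_apply]

lemma eq_of_conj_eq (hφ : OneOrbit φ) {σ₁ σ₂ : Perm (Fin n)}
    (h : σ₁⁻¹ * φ * σ₁ = σ₂⁻¹ * φ * σ₂) {x : Fin n} (hx : σ₁ x = σ₂ x) : σ₁ = σ₂ := by
  have hcomm : Commute (σ₂ * σ₁⁻¹) φ :=
    calc σ₂ * σ₁⁻¹ * φ = σ₂ * (σ₁⁻¹ * φ * σ₁) * σ₁⁻¹ := by group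
      _ = σ₂ * (σ₂⁻¹ * φ * σ₂) * σ₁⁻¹ := by rw [h]
      _ = φ * (σ₂ * σ₁⁻¹) := by group
  exact (mul_inv_eq_one.mp (hφ.eq_one_of_commute hcomm (x := σ₁ x) (by simpa using hx.symm))).symm

lemma apply_ne_self [Nontrivial (Fin n)] (hφ : OneOrbit φ) (x : Fin n) : φ x ≠ x := by
  intro hx
  obtain ⟨y, hy⟩ := exists_ne x
  obtain ⟨m, hm⟩ := hφ x y
  exact hy (hm ▸ pow_apply_eq_self_of_apply_eq_self hx m)

lemma support_eq_univ [Nontrivial (Fin n)] (hφ : OneOrbit φ) : φ.support = Finset.univ := by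
  ext x
  simp [hφ.apply_ne_self x]

lemma isCycle [Nontrivial (Fin n)] (hφ : OneOrbit φ) : φ.IsCycle := by
  obtain ⟨x⟩ := (inferInstance : Nonempty (Fin n))
  refine ⟨x, hφ.apply_ne_self x, fun y _ => ?_⟩
  obtain ⟨m, hm⟩ := hφ x y
  exact ⟨m, by simpa using hm⟩

lemma isConj (hφ : OneOrbit φ) (hψ : OneOrbit ψ) : IsConj φ ψ := by
  rcases subsingleton_or_nontrivial (Fin n) with _ | _
  · rw [Subsingleton.elim φ ψ]
  · exact hφ.isCycle.isConj hψ.isCycle (by rw [hφ.support_eq_univ, hψ.support_eq_univ])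

/-- Composing a conjugator with powers of `φ` does not change the conjugate, and lets it
move any given point to any other. -/
lemma exists_conj_eq_and_apply_eq (hφ : OneOrbit φ) (hconj : IsConj φ ψ) (x y : Fin n) :
    ∃ τ : Perm (Fin n), τ⁻¹ * φ * τ = ψ ∧ τ x = y := by
  obtain ⟨c, rfl⟩ := isConj_iff.mp hconj
  obtain ⟨m, hm⟩ := hφ (c⁻¹ x) y
  exact ⟨φ ^ m * c⁻¹, by group, by rw [mul_apply, hm]⟩

end OneOrbit

/-- The mapping `π ↦ Φ(π')`, where
`π' = (n+1) π(1) … π(n)`, is a bijection from `S_n` onto the set `S_{n+1}^c`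
of one-orbit permutations of `{1, …, n+1}`. -/
theorem bijOn_linkPerm_appendMax_univ (n : ℕ) :
    Set.BijOn (fun π : Equiv.Perm (Fin n) => linkPerm (appendMax π))
      Set.univ {φ : Equiv.Perm (Fin (n + 1)) | OneOrbit φ} := by
  simp only [linkPerm_eq_conj]
  refine ⟨fun π _ => ?_, fun π₁ _ π₂ _ h => ?_, fun φ hφ => ?_⟩
  · exact oneOrbit_finRotate.conj (appendMax π)
  · refine appendMax_injective (oneOrbit_finRotate.eq_of_conj_eq h (x := 0) ?_)
    rw [appendMax_zero, appendMax_zero]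
  · obtain ⟨τ, hτ, h0⟩ := oneOrbit_finRotate.exists_conj_eq_and_apply_eq
      (oneOrbit_finRotate.isConj hφ) 0 (Fin.last n)
    obtain ⟨π, rfl⟩ := exists_appendMax_eq h0
    exact ⟨π, trivial, hτ⟩
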